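/- arXiv:2511.22346 — 3 statements merged into one kernel-verified Lean document; each statement's English description precedes it below -/
import Mathlib

section
/- If a collection of cells P is the disjoint union of subcollections P₁,…,P_s such that no cell of P_i shares a row or column or inner interval with a cell of P_j for i ≠ j, then the switching rook polynomial of P is the product of the switching rook polynomials of the P_i: r̃_P(t) = r̃_{P₁}(t) ⋯ r̃_{P_s}(t). -/
/-- A cell in `ℕ²`, identified by its lower-left corner. -/
abbrev Cell := ℕ × ℕ

/-- Two cells attack along a row of `P`: same `y`-coordinate and every cell
between them belongs to `P` (they lie in a common horizontal cell interval). -/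
def RowAttack (P : Finset Cell) (a b : Cell) : Prop :=
  a.2 = b.2 ∧ ∀ x, min a.1 b.1 ≤ x → x ≤ max a.1 b.1 → (x, a.2) ∈ P

/-- Two cells attack along a column of `P`. -/
def ColAttack (P : Finset Cell) (a b : Cell) : Prop :=
  a.1 = b.1 ∧ ∀ y, min a.2 b.2 ≤ y → y ≤ max a.2 b.2 → (a.1, y) ∈ P

/-- Two distinct cells of `P` carrying attacking rooks. -/
def Attack (P : Finset Cell) (a b : Cell) : Prop :=
  a ≠ b ∧ (RowAttack P a b ∨ ColAttack P a b)

/-- A `k`-rook configuration in `P`: `k` cells of `P`, pairwise non-attacking. -/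
def IsRookConfig (P : Finset Cell) (k : ℕ) (C : Finset Cell) : Prop :=
  C ⊆ P ∧ C.card = k ∧ ∀ a ∈ C, ∀ b ∈ C, ¬ Attack P a b

/-- Two cells are opposite corner cells of an inner rectangle of `P`:
distinct rows and columns, and every cell of the spanned rectangle is in `P`. -/
def InnerRectPair (P : Finset Cell) (a b : Cell) : Prop :=
  a.1 ≠ b.1 ∧ a.2 ≠ b.2 ∧
    ∀ x y, min a.1 b.1 ≤ x → x ≤ max a.1 b.1 → min a.2 b.2 ≤ y →
      y ≤ max a.2 b.2 → (x, y) ∈ P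

/-- A switch: two rooks on opposite corner cells of an inner rectangle of `P`
are replaced by rooks on the other two corner cells. -/
def SwitchStep (P : Finset Cell) (C D : Finset Cell) : Prop :=
  ∃ a ∈ C, ∃ b ∈ C, InnerRectPair P a b ∧
    D = (C \ {a, b}) ∪ {(a.1, b.2), (b.1, a.2)}

/-- Switch-equivalence on `k`-rook configurations of `P`. -/
def switchSetoid (P : Finset Cell) (k : ℕ) :
    Setoid {C : Finset Cell // IsRookConfig P k C} where
  r A B := Relation.EqvGen (SwitchStep P) A.1 B.1
  iseqv :=
    ⟨fun _ => Relation.EqvGen.refl _, fun h => Relation.EqvGen.symm _ _ h,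
      fun h1 h2 => Relation.EqvGen.trans _ _ _ h1 h2⟩

/-- `r_k(P)`: the number of `k`-rook configurations in `P`. -/
noncomputable def rConf (P : Finset Cell) (k : ℕ) : ℕ :=
  Nat.card {C : Finset Cell // IsRookConfig P k C}

/-- `r̃_k(P)`: the number of switch-equivalence classes of `k`-rook configurations. -/
noncomputable def rSwitch (P : Finset Cell) (k : ℕ) : ℕ :=
  Nat.card (Quotient (switchSetoid P k))

/-- The rook number `r(P)`: the maximum number of non-attacking rooks in `P`. -/
noncomputable def rookNumber (P : Finset Cell) : ℕ :=
  sSup {k | ∃ C, IsRookConfig P k C}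

/-- The rook polynomial `r_P(t) = Σ_{j=0}^{r(P)} r_j(P) t^j`. -/
noncomputable def rookPoly (P : Finset Cell) : Polynomial ℤ :=
  ∑ j ∈ Finset.range (rookNumber P + 1), (rConf P j : ℤ) • Polynomial.X ^ j

/-- The switching rook polynomial `r̃_P(t) = Σ_{j=0}^{r(P)} r̃_j(P) t^j`. -/
noncomputable def switchRookPoly (P : Finset Cell) : Polynomial ℤ :=
  ∑ j ∈ Finset.range (rookNumber P + 1), (rSwitch P j : ℤ) • Polynomial.X ^ j

/-!
Sort the switch classes of rook placements of all sizes by size: `r̃_P(t) = ∑_q t^{|q|}`. The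
size is a switch invariant because a switch does not change the set of cells that can be reached
from the rooks along row segments, and non-attacking rooks lie on different row segments.

Every row or column segment of `P`, hence every inner rectangle of `P`, lies in a single `P_i`.
So a rook placement on `P` is the same as a family of placements on the `P_i`, a switch acts on
one component only, and switch classes on `P` are families of switch classes on the `P_i` whose
sizes add up. The product formula is then the expansion of `∏_i ∑_{q_i} t^{|q_i|}`.
-/

open Finset Polynomial Relation

section Attack

variable {P Q : Finset Cell} {a b c : Cell}

theorem RowAttack.symm (h : RowAttack Q a b) : RowAttack Q b a :=
  ⟨h.1.symm, fun x h₁ h₂ => h.1 ▸ h.2 x (by omega) (by omega)⟩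

theorem RowAttack.trans (hab : RowAttack Q a b) (hbc : RowAttack Q b c) : RowAttack Q a c := by
  refine ⟨hab.1.trans hbc.1, fun x h₁ h₂ => ?_⟩
  by_cases hx : min a.1 b.1 ≤ x ∧ x ≤ max a.1 b.1
  · exact hab.2 x hx.1 hx.2
  · exact hab.1 ▸ hbc.2 x (by omega) (by omega)

instance (Q : Finset Cell) : Std.Symm (RowAttack Q) := ⟨fun _ _ => RowAttack.symm⟩

instance (Q : Finset Cell) : IsTrans Cell (RowAttack Q) := ⟨fun _ _ _ => RowAttack.trans⟩

theorem RowAttack.mono (hQP : Q ⊆ P) (h : RowAttack Q a b) : RowAttack P a b :=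
  ⟨h.1, fun x h₁ h₂ => hQP (h.2 x h₁ h₂)⟩

theorem ColAttack.mono (hQP : Q ⊆ P) (h : ColAttack Q a b) : ColAttack P a b :=
  ⟨h.1, fun y h₁ h₂ => hQP (h.2 y h₁ h₂)⟩

theorem Attack.mono (hQP : Q ⊆ P) (h : Attack Q a b) : Attack P a b :=
  ⟨h.1, h.2.imp (RowAttack.mono hQP) (ColAttack.mono hQP)⟩

theorem InnerRectPair.mono (hQP : Q ⊆ P) (h : InnerRectPair Q a b) : InnerRectPair P a b :=
  ⟨h.1, h.2.1, fun x y h₁ h₂ h₃ h₄ => hQP (h.2.2 x y h₁ h₂ h₃ h₄)⟩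

theorem RowAttack.right_mem (h : RowAttack Q a b) : b ∈ Q := by
  simpa [h.1] using h.2 b.1 (by omega) (by omega)

theorem ColAttack.right_mem (h : ColAttack Q a b) : b ∈ Q := by
  simpa [h.1] using h.2 b.2 (by omega) (by omega)

end Attack

section SizeInvariance

variable {Q C D : Finset Cell}

def rowSpan (Q C : Finset Cell) : Set Cell :=
  {c | ∃ a ∈ C, ReflGen (RowAttack Q) a c}

theorem rowSpan_subset_of_forall (h : ∀ c ∈ C, ∃ d ∈ D, ReflGen (RowAttack Q) d c) :
    rowSpan Q C ⊆ rowSpan Q D := by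
  rintro x ⟨c, hc, hcx⟩
  obtain ⟨d, hd, hdc⟩ := h c hc
  exact ⟨d, hd, _root_.trans hdc hcx⟩

theorem SwitchStep.rowSpan_eq (h : SwitchStep Q C D) : rowSpan Q C = rowSpan Q D := by
  obtain ⟨a, ha, b, hb, hab, rfl⟩ := h
  have hb' : RowAttack Q (a.1, b.2) b :=
    ⟨rfl, fun x h₁ h₂ => hab.2.2 x b.2 (by simp at h₁; omega) (by simp at h₂; omega)
      (by omega) (by omega)⟩
  have ha' : RowAttack Q (b.1, a.2) a :=
    ⟨rfl, fun x h₁ h₂ => hab.2.2 x a.2 (by simp at h₁; omega) (by simp at h₂; omega)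
      (by omega) (by omega)⟩
  apply Set.Subset.antisymm <;> apply rowSpan_subset_of_forall <;> intro c hc
  · rcases eq_or_ne c a with rfl | hca
    · exact ⟨(b.1, c.2), by simp, .single ha'⟩
    rcases eq_or_ne c b with rfl | hcb
    · exact ⟨(a.1, c.2), by simp, .single hb'⟩
    exact ⟨c, by simp [hc, hca, hcb], .refl⟩
  · simp only [mem_union, mem_sdiff, mem_insert, mem_singleton] at hc
    rcases hc with ⟨hc, -⟩ | rfl | rfl
    · exact ⟨c, hc, .refl⟩
    · exact ⟨b, hb, .single hb'.symm⟩
    · exact ⟨a, ha, .single ha'.symm⟩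

theorem Relation.EqvGen.rowSpan_eq (h : EqvGen (SwitchStep Q) C D) : rowSpan Q C = rowSpan Q D := by
  induction h with
  | rel _ _ h => exact h.rowSpan_eq
  | refl => rfl
  | symm _ _ _ ih => exact ih.symm
  | trans _ _ _ _ _ ih₁ ih₂ => exact ih₁.trans ih₂

theorem card_le_card_of_rowSpan_subset (hC : ∀ a ∈ C, ∀ b ∈ C, ¬ Attack Q a b)
    (h : rowSpan Q C ⊆ rowSpan Q D) : C.card ≤ D.card := by
  refine card_le_card_of_forall_subsingleton (fun c d => ReflGen (RowAttack Q) d c)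
    (fun c hc => h ⟨c, hc, .refl⟩) fun d _ c₁ hc₁ c₂ hc₂ => ?_
  rcases _root_.trans (symm hc₁.2) hc₂.2 with _ | h₁₂
  · rfl
  · by_contra hne
    exact hC c₁ hc₁.1 c₂ hc₂.1 ⟨hne, .inl h₁₂⟩

theorem card_eq_of_eqvGen (hC : ∀ a ∈ C, ∀ b ∈ C, ¬ Attack Q a b)
    (hD : ∀ a ∈ D, ∀ b ∈ D, ¬ Attack Q a b) (h : EqvGen (SwitchStep Q) C D) :
    C.card = D.card :=
  (card_le_card_of_rowSpan_subset hC h.rowSpan_eq.le).antisymm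
    (card_le_card_of_rowSpan_subset hD h.rowSpan_eq.ge)

end SizeInvariance

section SwitchClass

def IsRookPlacement (Q C : Finset Cell) : Prop :=
  C ⊆ Q ∧ ∀ a ∈ C, ∀ b ∈ C, ¬ Attack Q a b

abbrev RookPlacement (Q : Finset Cell) : Type := {C : Finset Cell // IsRookPlacement Q C}

instance RookPlacement.instFinite (Q : Finset Cell) : Finite (RookPlacement Q) :=
  (Q.powerset.finite_toSet.subset fun _ hC => mem_powerset.2 hC.1).to_subtype

instance RookPlacement.instSetoid (Q : Finset Cell) : Setoid (RookPlacement Q) :=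
  (EqvGen.setoid (SwitchStep Q)).comap Subtype.val

abbrev SwitchClass (Q : Finset Cell) : Type := Quotient (RookPlacement.instSetoid Q)

noncomputable instance (Q : Finset Cell) : Fintype (SwitchClass Q) := Fintype.ofFinite _

variable {Q : Finset Cell}

def SwitchClass.card : SwitchClass Q → ℕ :=
  Quotient.lift (fun C => C.1.card) fun C D h => card_eq_of_eqvGen C.2.2 D.2.2 h

theorem rSwitch_eq_card (Q : Finset Cell) (k : ℕ) :
    rSwitch Q k = Nat.card {q : SwitchClass Q // q.card = k} := by
  let e : {C : RookPlacement Q // C.1.card = k} ≃ {C // IsRookConfig Q k C} :=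
    { toFun := fun C => ⟨C.1.1, C.1.2.1, C.2, C.1.2.2⟩
      invFun := fun C => ⟨⟨C.1, C.2.1, C.2.2.2⟩, C.2.2.1⟩
      left_inv := fun _ => rfl
      right_inv := fun _ => rfl }
  exact Nat.card_congr ((Quotient.congr e fun _ _ => Iff.rfl).symm.trans
    (Equiv.subtypeQuotientEquivQuotientSubtype (fun C => C.1.card = k)
      (fun q : SwitchClass Q => q.card = k) (fun _ => Iff.rfl) fun _ _ => Iff.rfl).symm)

theorem SwitchClass.card_le_rookNumber (q : SwitchClass Q) : q.card ≤ rookNumber Q := by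
  induction q using Quotient.inductionOn with
  | h C =>
    refine le_csSup ⟨Q.card, ?_⟩ ⟨C.1, C.2.1, rfl, C.2.2⟩
    rintro k ⟨D, hD⟩
    exact hD.2.1 ▸ card_le_card hD.1

theorem switchRookPoly_eq_sum (Q : Finset Cell) :
    switchRookPoly Q = ∑ q : SwitchClass Q, X ^ q.card := by
  rw [switchRookPoly, ← sum_fiberwise_of_maps_to' (g := SwitchClass.card)
    (t := range (rookNumber Q + 1)) fun q _ => mem_range_succ_iff.2 q.card_le_rookNumber]
  refine sum_congr rfl fun k _ => ?_
  rw [sum_const, rSwitch_eq_card, Nat.card_eq_fintype_card, Fintype.card_subtype, natCast_zsmul]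

end SwitchClass

section AttackClosed

/-- `Q` is a union of classes of `P` for the equivalence relation generated by "lie in a common
row or column segment of `P`". -/
def IsAttackClosed (P Q : Finset Cell) : Prop :=
  ∀ a ∈ Q, ∀ b, RowAttack P a b ∨ ColAttack P a b → b ∈ Q

def InRect (a b u : Cell) : Prop :=
  min a.1 b.1 ≤ u.1 ∧ u.1 ≤ max a.1 b.1 ∧ min a.2 b.2 ≤ u.2 ∧ u.2 ≤ max a.2 b.2

variable {P Q : Finset Cell} {a b : Cell}

theorem RowAttack.of_isAttackClosed (hQ : IsAttackClosed P Q) (ha : a ∈ Q)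
    (h : RowAttack P a b) : RowAttack Q a b :=
  ⟨h.1, fun x h₁ h₂ => hQ a ha _ <| .inl ⟨rfl, fun x' _ _ => h.2 x' (by omega) (by omega)⟩⟩

theorem ColAttack.of_isAttackClosed (hQ : IsAttackClosed P Q) (ha : a ∈ Q)
    (h : ColAttack P a b) : ColAttack Q a b :=
  ⟨h.1, fun y h₁ h₂ => hQ a ha _ <| .inr ⟨rfl, fun y' _ _ => h.2 y' (by omega) (by omega)⟩⟩

theorem Attack.of_isAttackClosed (hQ : IsAttackClosed P Q) (ha : a ∈ Q) (h : Attack P a b) :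
    Attack Q a b :=
  ⟨h.1, h.2.imp (·.of_isAttackClosed hQ ha) (·.of_isAttackClosed hQ ha)⟩

/-- Walk from `u` along its row to the column of `v`, then along that column to `v`. -/
theorem InnerRectPair.mem_of_isAttackClosed (hQ : IsAttackClosed P Q) (h : InnerRectPair P a b)
    {u v : Cell} (hu : InRect a b u) (hv : InRect a b v) (huQ : u ∈ Q) : v ∈ Q := by
  unfold InRect at hu hv
  have hrow : (v.1, u.2) ∈ Q := hQ u huQ _ <| .inl
    ⟨rfl, fun x h₁ h₂ => h.2.2 x u.2 (by simp at h₁; omega) (by simp at h₂; omega)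
      (by omega) (by omega)⟩
  exact hQ _ hrow _ <| .inr
    ⟨rfl, fun y h₁ h₂ => h.2.2 v.1 y (by omega) (by omega) (by simp at h₁; omega)
      (by simp at h₂; omega)⟩

theorem InnerRectPair.of_isAttackClosed (hQ : IsAttackClosed P Q) (h : InnerRectPair P a b)
    (ha : a ∈ Q) : InnerRectPair Q a b :=
  ⟨h.1, h.2.1, fun x y h₁ h₂ h₃ h₄ => h.mem_of_isAttackClosed hQ
    (u := a) (by unfold InRect; omega) ⟨h₁, h₂, h₃, h₄⟩ ha⟩

theorem SwitchStep.inter_eq_or_inter (hQ : IsAttackClosed P Q) {C D : Finset Cell}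
    (h : SwitchStep P C D) : C ∩ Q = D ∩ Q ∨ SwitchStep Q (C ∩ Q) (D ∩ Q) := by
  obtain ⟨a, ha, b, hb, hab, rfl⟩ := h
  have corner_iff : ∀ u v, InRect a b u → InRect a b v → (u ∈ Q ↔ v ∈ Q) := fun u v hu hv =>
    ⟨hab.mem_of_isAttackClosed hQ hu hv, hab.mem_of_isAttackClosed hQ hv hu⟩
  have hbQ := corner_iff a b (by unfold InRect; omega) (by unfold InRect; omega)
  have ha'Q := corner_iff a (a.1, b.2) (by unfold InRect; omega) (by unfold InRect; simp)
  have hb'Q := corner_iff a (b.1, a.2) (by unfold InRect; omega) (by unfold InRect; simp)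
  by_cases haQ : a ∈ Q
  · refine .inr ⟨a, mem_inter.2 ⟨ha, haQ⟩, b, mem_inter.2 ⟨hb, hbQ.1 haQ⟩,
      hab.of_isAttackClosed hQ haQ, ?_⟩
    ext c
    simp only [mem_inter, mem_union, mem_sdiff, mem_insert, mem_singleton]
    grind
  · left
    ext c
    simp only [mem_inter, mem_union, mem_sdiff, mem_insert, mem_singleton]
    grind

theorem Relation.EqvGen.inter (hQ : IsAttackClosed P Q) {C D : Finset Cell}
    (h : EqvGen (SwitchStep P) C D) : EqvGen (SwitchStep Q) (C ∩ Q) (D ∩ Q) := by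
  induction h with
  | rel C D h =>
    rcases h.inter_eq_or_inter hQ with h | h
    · exact h ▸ .refl _
    · exact .rel _ _ h
  | refl => exact .refl _
  | symm _ _ _ ih => exact ih.symm
  | trans _ _ _ _ _ ih₁ ih₂ => exact ih₁.trans _ _ _ ih₂

theorem SwitchStep.union_left (hQP : Q ⊆ P) {R X Y : Finset Cell} (hR : Disjoint R Q)
    (h : SwitchStep Q X Y) : SwitchStep P (R ∪ X) (R ∪ Y) := by
  obtain ⟨a, ha, b, hb, hab, rfl⟩ := h
  have haR : a ∉ R := disjoint_right.1 hR <| hab.2.2 a.1 a.2 (by omega) (by omega) (by omega)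
    (by omega)
  have hbR : b ∉ R := disjoint_right.1 hR <| hab.2.2 b.1 b.2 (by omega) (by omega) (by omega)
    (by omega)
  refine ⟨a, mem_union_right _ ha, b, mem_union_right _ hb, hab.mono hQP, ?_⟩
  ext c
  simp only [mem_union, mem_sdiff, mem_insert, mem_singleton]
  grind

theorem Relation.EqvGen.union_left (hQP : Q ⊆ P) {R X Y : Finset Cell} (hR : Disjoint R Q)
    (h : EqvGen (SwitchStep Q) X Y) : EqvGen (SwitchStep P) (R ∪ X) (R ∪ Y) := by
  induction h with
  | rel X Y h => exact .rel _ _ (h.union_left hQP hR)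
  | refl => exact .refl _
  | symm _ _ _ ih => exact ih.symm
  | trans _ _ _ _ _ ih₁ ih₂ => exact ih₁.trans _ _ _ ih₂

end AttackClosed

section Decomposition

open Function

variable {ι : Type*} {Ps : ι → Finset Cell} {P : Finset Cell}

theorem biUnion_inter_self_of_subset {s : Finset ι} {C : Finset Cell} (hC : C ⊆ s.biUnion Ps) :
    s.biUnion (fun i => C ∩ Ps i) = C := by
  rw [← inter_biUnion, inter_eq_left.2 hC]

variable [Fintype ι]

theorem isAttackClosed_of_not_attack (hP : P = univ.biUnion Ps)
    (hindep : ∀ i j, i ≠ j → ∀ a ∈ Ps i, ∀ b ∈ Ps j, ¬ RowAttack P a b ∧ ¬ ColAttack P a b)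
    (i : ι) : IsAttackClosed P (Ps i) := by
  intro a ha b hab
  have hbP : b ∈ P := hab.elim RowAttack.right_mem ColAttack.right_mem
  obtain ⟨j, -, hbj⟩ := mem_biUnion.1 (hP ▸ hbP)
  by_contra hbi
  have hij : i ≠ j := by rintro rfl; exact hbi hbj
  exact hab.elim (hindep i j hij a ha b hbj).1 (hindep i j hij a ha b hbj).2

theorem biUnion_inter_of_pairwise_disjoint (hdisj : Pairwise (Disjoint on Ps)) {f : ι → Finset Cell}
    (hf : ∀ i, f i ⊆ Ps i) (i : ι) : univ.biUnion f ∩ Ps i = f i := by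
  ext c
  simp only [mem_inter, mem_biUnion, mem_univ, true_and]
  refine ⟨fun ⟨⟨j, hcj⟩, hci⟩ => ?_, fun hc => ⟨⟨i, hc⟩, hf i hc⟩⟩
  obtain rfl : j = i := by_contra fun hji => disjoint_left.1 (hdisj hji) (hf j hcj) hci
  exact hcj

theorem isRookPlacement_biUnion (hP : P = univ.biUnion Ps) (hdisj : Pairwise (Disjoint on Ps))
    (hclosed : ∀ i, IsAttackClosed P (Ps i)) {f : ι → Finset Cell}
    (hf : ∀ i, IsRookPlacement (Ps i) (f i)) : IsRookPlacement P (univ.biUnion f) := by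
  refine ⟨hP ▸ biUnion_mono fun i _ => (hf i).1, ?_⟩
  simp only [mem_biUnion, mem_univ, true_and]
  rintro a ⟨i, hai⟩ b ⟨j, hbj⟩ hab
  have hbi : b ∈ Ps i := hclosed i a ((hf i).1 hai) b hab.2
  obtain rfl : i = j := by_contra fun hij => disjoint_left.1 (hdisj hij) hbi ((hf j).1 hbj)
  exact (hf i).2 a hai b hbj (hab.of_isAttackClosed (hclosed i) ((hf i).1 hai))

def rookPlacementEquivPi (hP : P = univ.biUnion Ps) (hdisj : Pairwise (Disjoint on Ps))
    (hclosed : ∀ i, IsAttackClosed P (Ps i)) : RookPlacement P ≃ ∀ i, RookPlacement (Ps i) where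
  toFun C i := ⟨C.1 ∩ Ps i, inter_subset_right, fun a ha b hb hab =>
    C.2.2 a (mem_of_mem_inter_left ha) b (mem_of_mem_inter_left hb)
      (hab.mono (hP ▸ subset_biUnion_of_mem Ps (mem_univ i)))⟩
  invFun f := ⟨univ.biUnion fun i => (f i).1,
    isRookPlacement_biUnion hP hdisj hclosed fun i => (f i).2⟩
  left_inv C := Subtype.ext (biUnion_inter_self_of_subset (C.2.1.trans hP.subset))
  right_inv f := funext fun i =>
    Subtype.ext (biUnion_inter_of_pairwise_disjoint hdisj (fun j => (f j).2.1) i)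

theorem eqvGen_biUnion (hP : P = univ.biUnion Ps) (hdisj : Pairwise (Disjoint on Ps))
    {f g : ι → Finset Cell} (hf : ∀ i, f i ⊆ Ps i) (hg : ∀ i, g i ⊆ Ps i)
    (h : ∀ i, EqvGen (SwitchStep (Ps i)) (f i) (g i)) :
    EqvGen (SwitchStep P) (univ.biUnion f) (univ.biUnion g) := by
  classical
  -- The components in `T` are switched one at a time; `R` holds all cells outside them.
  suffices ∀ T : Finset ι, ∀ R, Disjoint R (T.biUnion Ps) →
      EqvGen (SwitchStep P) (R ∪ T.biUnion f) (R ∪ T.biUnion g) by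
    simpa using this univ ∅ (disjoint_empty_left _)
  intro T
  induction T using Finset.induction_on with
  | empty => exact fun R _ => .refl _
  | insert i T hiT ih =>
    intro R hR
    rw [biUnion_insert, disjoint_union_right] at hR
    have hTi : Disjoint (T.biUnion Ps) (Ps i) :=
      (disjoint_biUnion_left _ _ _).2 fun j hj => hdisj (ne_of_mem_of_not_mem hj hiT)
    have hT : EqvGen (SwitchStep P) (R ∪ f i ∪ T.biUnion f) (R ∪ f i ∪ T.biUnion g) :=
      ih _ (disjoint_union_left.2 ⟨hR.2, hTi.symm.mono_left (hf i)⟩)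
    have hi : EqvGen (SwitchStep P) (R ∪ T.biUnion g ∪ f i) (R ∪ T.biUnion g ∪ g i) :=
      (h i).union_left (hP ▸ subset_biUnion_of_mem Ps (mem_univ i))
        (disjoint_union_left.2 ⟨hR.1, hTi.mono_left (biUnion_mono fun j _ => hg j)⟩)
    rw [biUnion_insert, biUnion_insert, ← union_assoc, ← union_assoc, union_right_comm R (g i)]
    exact hT.trans _ _ _ (union_right_comm R (f i) _ ▸ hi)

theorem eqvGen_switchStep_iff (hP : P = univ.biUnion Ps) (hdisj : Pairwise (Disjoint on Ps))
    (hclosed : ∀ i, IsAttackClosed P (Ps i)) {C D : Finset Cell} (hC : C ⊆ P) (hD : D ⊆ P) :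
    EqvGen (SwitchStep P) C D ↔ ∀ i, EqvGen (SwitchStep (Ps i)) (C ∩ Ps i) (D ∩ Ps i) := by
  refine ⟨fun h i => h.inter (hclosed i), fun h => ?_⟩
  rw [← biUnion_inter_self_of_subset (hC.trans hP.subset),
    ← biUnion_inter_self_of_subset (hD.trans hP.subset)]
  exact eqvGen_biUnion hP hdisj (fun _ => inter_subset_right) (fun _ => inter_subset_right) h

noncomputable def switchClassEquivPi (hP : P = univ.biUnion Ps) (hdisj : Pairwise (Disjoint on Ps))
    (hclosed : ∀ i, IsAttackClosed P (Ps i)) : SwitchClass P ≃ ∀ i, SwitchClass (Ps i) :=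
  (Quotient.congr (rookPlacementEquivPi hP hdisj hclosed) fun C D =>
    eqvGen_switchStep_iff hP hdisj hclosed C.2.1 D.2.1).trans (Setoid.piQuotientEquiv _).symm

theorem card_switchClassEquivPi (hP : P = univ.biUnion Ps) (hdisj : Pairwise (Disjoint on Ps))
    (hclosed : ∀ i, IsAttackClosed P (Ps i)) (q : SwitchClass P) :
    q.card = ∑ i, (switchClassEquivPi hP hdisj hclosed q i).card := by
  induction q using Quotient.inductionOn with
  | h C =>
    change C.1.card = ∑ i, (C.1 ∩ Ps i).card
    conv_lhs => rw [← biUnion_inter_self_of_subset (C.2.1.trans hP.subset)]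
    exact card_biUnion fun i _ j _ hij => (hdisj hij).mono inter_subset_right inter_subset_right

end Decomposition

/-- If `P` is the disjoint union of subcollections `P₁,…,P_s` such that no cell
of `P_i` shares a row, a column, or an inner rectangle of `P` with a cell of
`P_j` for `i ≠ j`, then the switching rook polynomial of `P` is the product of
those of the `P_i`. -/
theorem stmt6 (s : ℕ) (Ps : Fin s → Finset Cell) (P : Finset Cell)
    (hunion : P = Finset.univ.biUnion Ps)
    (hdisj : ∀ i j, i ≠ j → Disjoint (Ps i) (Ps j))
    (hindep : ∀ i j, i ≠ j → ∀ a ∈ Ps i, ∀ b ∈ Ps j,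
      ¬ RowAttack P a b ∧ ¬ ColAttack P a b ∧ ¬ InnerRectPair P a b) :
    switchRookPoly P = ∏ i, switchRookPoly (Ps i) := by
  have hclosed := isAttackClosed_of_not_attack hunion fun i j hij a ha b hb =>
    (hindep i j hij a ha b hb).imp_right And.left
  calc switchRookPoly P = ∑ q : SwitchClass P, X ^ q.card := switchRookPoly_eq_sum P
    _ = ∑ q : ∀ i, SwitchClass (Ps i), ∏ i, X ^ (q i).card :=
      Fintype.sum_equiv (switchClassEquivPi hunion hdisj hclosed) _ _ fun q => by
        rw [card_switchClassEquivPi hunion hdisj hclosed, prod_pow_eq_pow_sum]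
    _ = ∏ i, switchRookPoly (Ps i) := by
      simp only [switchRookPoly_eq_sum, Fintype.prod_sum]
end

section
/- Let P be a convex polyomino with minimal bounding rectangle [A,B] such that the corner cell A (lower-left corner cell of the bounding rectangle) belongs to P. Then P satisfies the condition (#): for any two inner intervals [b,a] and [d,c] of P positioned so that they share an anti-diagonal corner f (with e,f the anti-diagonal corners of [b,a] and f,g those of [d,c], arranged as two rectangles meeting at f with [b,a] up-left and [d,c] down-right), either the pair b,g or the pair e,c forms the anti-diagonal corners of an inner interval of P. -/
/-- Two cells share an edge. -/
def AdjCell (a b : Cell) : Prop :=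
  (a.1 = b.1 ∧ (a.2 + 1 = b.2 ∨ b.2 + 1 = a.2)) ∨
    (a.2 = b.2 ∧ (a.1 + 1 = b.1 ∨ b.1 + 1 = a.1))

/-- Every two cells of `P` are joined by a path of cells of `P` in which
consecutive cells share an edge. -/
def CellConnected (P : Finset Cell) : Prop :=
  ∀ a ∈ P, ∀ b ∈ P,
    Relation.ReflTransGen (fun c d => c ∈ P ∧ d ∈ P ∧ AdjCell c d) a b

/-- A polyomino: a nonempty, edge-connected finite collection of cells. -/
def IsPolyomino (P : Finset Cell) : Prop := P.Nonempty ∧ CellConnected P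

/-- Row convexity: any two cells of `P` in the same row have all intermediate
cells in `P`. -/
def RowConvex (P : Finset Cell) : Prop :=
  ∀ a ∈ P, ∀ b ∈ P, a.2 = b.2 → ∀ x, a.1 ≤ x → x ≤ b.1 → (x, a.2) ∈ P

/-- Column convexity. -/
def ColConvex (P : Finset Cell) : Prop :=
  ∀ a ∈ P, ∀ b ∈ P, a.1 = b.1 → ∀ y, a.2 ≤ y → y ≤ b.2 → (a.1, y) ∈ P

/-- A convex collection of cells: both row and column convex. -/
def CellConvex (P : Finset Cell) : Prop := RowConvex P ∧ ColConvex P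

/-- The proper vertex interval `[(u1,v1),(u2,v2)]` (with `u1 < u2`, `v1 < v2`)
is an inner interval of `P`: every cell of the spanned rectangle lies in `P`. -/
def InnerInt (P : Finset Cell) (u1 v1 u2 v2 : ℕ) : Prop :=
  u1 < u2 ∧ v1 < v2 ∧ ∀ x y, u1 ≤ x → x < u2 → v1 ≤ y → y < v2 → (x, y) ∈ P

/-- Condition (#): whenever two inner intervals of `P` meet at an anti-diagonal
corner `f = (x2,y1)` (the first interval `[(x1,y1),(x2,y2)]` up-left, the second
`[(x2,y0),(x3,y1)]` down-right), either `b = (x1,y1)` and `g = (x3,y0)`, or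
`e = (x1,y2)` and `c = (x3,y1)`, are the anti-diagonal corners of an inner
interval of `P`. -/
def ConditionSharp (P : Finset Cell) : Prop :=
  ∀ x1 y1 x2 y2 x3 y0, InnerInt P x1 y1 x2 y2 → InnerInt P x2 y0 x3 y1 →
    (InnerInt P x1 y0 x3 y1 ∨ InnerInt P x1 y1 x3 y2)

/-!
Convexity, connectedness and the corner cell force the lower boundary of `P` to be weakly
increasing from left to right: if `(x + 1, m) ∈ P` lies below some cell of column `x`, then
`(x, m) ∈ P`, since otherwise row `m` and column `x` would wall off the cells strictly left of
column `x` and below row `m` (among them the corner) from `(x + 1, m)`. Iterating over the columns,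
`(p, q), (r, s) ∈ P` with `p ≤ r` and `s ≤ q` give `(p, s) ∈ P`. In the situation of (#), applying
this to a cell `(x, y1)` of the up-left interval and a cell `(x2, y)` of the down-right one fills
the rectangle with anti-diagonal corners `b` and `g`.
-/

lemma AdjCell.fst_le {c d : Cell} (h : AdjCell c d) : d.1 ≤ c.1 + 1 := by
  rcases h with ⟨h, _⟩ | ⟨_, h | h⟩ <;> omega

lemma AdjCell.snd_le {c d : Cell} (h : AdjCell c d) : d.2 ≤ c.2 + 1 := by
  rcases h with ⟨_, h | h⟩ | ⟨h, _⟩ <;> omega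

lemma AdjCell.fst_eq_or_snd_eq {c d : Cell} (h : AdjCell c d) : c.1 = d.1 ∨ c.2 = d.2 :=
  h.imp And.left And.left

lemma CellConnected.mem_of_adj_closed {P : Finset Cell} (hP : CellConnected P) {S : Set Cell}
    (hS : ∀ c ∈ S, ∀ d ∈ P, AdjCell c d → d ∈ S) {c d : Cell} (hc : c ∈ P) (hd : d ∈ P)
    (hcS : c ∈ S) : d ∈ S := by
  induction hP c hc d hd with
  | refl => exact hcS
  | tail _ hstep ih => exact hS _ (ih hstep.1) _ hstep.2.1 hstep.2.2

lemma CellConnected.exists_mem_column {P : Finset Cell} (hP : CellConnected P) {a b c d x : ℕ}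
    (h₁ : (a, b) ∈ P) (h₂ : (c, d) ∈ P) (hax : a ≤ x) (hxc : x ≤ c) : ∃ y, (x, y) ∈ P := by
  by_contra! hx
  refine not_lt.2 hxc (hP.mem_of_adj_closed (S := {e | e.1 < x}) ?_ h₁ h₂
    (lt_of_le_of_ne hax fun e => hx b (e ▸ h₁)))
  rintro ⟨e₁, e₂⟩ he ⟨f₁, f₂⟩ hf hadj
  have hf₁ : f₁ ≠ x := fun e => hx f₂ (e ▸ hf)
  have := hadj.fst_le
  simp only [Set.mem_ofPred_eq] at he this ⊢
  omega

section Corner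

variable {P : Finset Cell} {a b : ℕ}

lemma mem_of_mem_succ_of_le (hconn : CellConnected P) (hconv : CellConvex P)
    (ha : IsLeast (P : Set Cell) (a, b)) {x u m : ℕ} (hu : (x, u) ∈ P) (hm : (x + 1, m) ∈ P)
    (hmu : m ≤ u) : (x, m) ∈ P := by
  by_contra h
  have hcol : ∀ y ≤ m, (x, y) ∉ P := fun y hy hy' => h (hconv.2 _ hy' _ hu rfl m hy hmu)
  have hrow : ∀ t ≤ x, (t, m) ∉ P := fun t ht ht' => h (hconv.1 _ ht' _ hm rfl x ht x.le_succ)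
  have hax : a < x := lt_of_le_of_ne (ha.2 hu).1 fun e => hcol b (ha.2 hm).2 (e ▸ ha.1)
  have hbm : b < m := lt_of_le_of_ne (ha.2 hm).2 fun e => hrow a hax.le (e ▸ ha.1)
  have hbox := hconn.mem_of_adj_closed (S := {e | e.1 < x ∧ e.2 < m}) ?_ ha.1 hm ⟨hax, hbm⟩
  · exact lt_irrefl x (Nat.lt_of_succ_lt hbox.1)
  rintro ⟨e₁, e₂⟩ ⟨he₁, he₂⟩ ⟨f₁, f₂⟩ hf hadj
  have h₁ := hadj.fst_le
  have h₂ := hadj.snd_le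
  have h₃ := hadj.fst_eq_or_snd_eq
  dsimp only at he₁ he₂ h₁ h₂ h₃
  have hf₁ : f₁ ≠ x := fun e => hcol f₂ (by omega) (e ▸ hf)
  have hf₂ : f₂ ≠ m := fun e => hrow f₁ (by omega) (e ▸ hf)
  exact ⟨by omega, by omega⟩

def LowerLeftClosed (P : Finset Cell) : Prop :=
  ∀ p q r s, (p, q) ∈ P → (r, s) ∈ P → p ≤ r → s ≤ q → (p, s) ∈ P

lemma lowerLeftClosed_of_isLeast (hconn : CellConnected P) (hconv : CellConvex P)
    (ha : IsLeast (P : Set Cell) (a, b)) : LowerLeftClosed P := by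
  intro p q r s hpq hrs hpr hsq
  induction r, hpr using Nat.le_induction generalizing s with
  | base => exact hconv.2 _ hrs _ hpq rfl s le_rfl hsq
  | succ r hpr ih =>
    obtain ⟨y, hy⟩ := hconn.exists_mem_column hpq hrs hpr r.le_succ
    rcases le_or_gt s y with hsy | hys
    · exact ih s (mem_of_mem_succ_of_le hconn hconv ha hy hrs hsy) hsq
    · exact hconv.2 _ (ih y hy (hys.le.trans hsq)) _ hpq rfl s hys.le hsq

end Corner

lemma LowerLeftClosed.conditionSharp {P : Finset Cell} (h : LowerLeftClosed P) :
    ConditionSharp P := by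
  rintro x1 y1 x2 y2 x3 y0 ⟨hx12, hy12, h₁⟩ ⟨hx23, hy01, h₂⟩
  refine Or.inl ⟨hx12.trans hx23, hy01, fun x y hx1 hx3 hy0 hy1 => ?_⟩
  rcases le_or_gt x2 x with hx2 | hx2
  · exact h₂ x y hx2 hx3 hy0 hy1
  · exact h x y1 x2 y (h₁ x y1 hx1 hx2 le_rfl hy12) (h₂ x2 y le_rfl hx23 hy0 hy1) hx2.le hy1.le

/-- A convex polyomino containing the lower-left corner cell of its minimal
bounding rectangle (a cell of `P` componentwise below-left of all cells of `P`)
satisfies Condition (#). -/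
theorem stmt10 (P : Finset Cell) (hP : IsPolyomino P) (hconv : CellConvex P)
    (hA : ∃ a ∈ P, ∀ b ∈ P, a.1 ≤ b.1 ∧ a.2 ≤ b.2) :
    ConditionSharp P := by
  obtain ⟨⟨a, b⟩, ha, hmin⟩ := hA
  exact (lowerLeftClosed_of_isLeast hP.2 hconv ⟨ha, fun c hc => hmin c hc⟩).conditionSharp
end

section
/- Let P be a simple collection of cells (the complement of P in the plane of cells is connected by edge-paths). If P₁ and P₂ are two distinct connected components of P, then their vertex sets share at most one point: |V(P₁) ∩ V(P₂)| ≤ 1. -/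
/-- The four corner vertices of a cell. -/
def cellVerts (c : Cell) : Finset Cell :=
  {c, (c.1 + 1, c.2), (c.1, c.2 + 1), (c.1 + 1, c.2 + 1)}

/-- The vertex set of a collection of cells. -/
def verts (P : Finset Cell) : Finset Cell := P.biUnion cellVerts

/-- `Q` is a connected component of `P`: a subcollection which is a polyomino
and is maximal, i.e. adding any further cell of `P` destroys connectedness. -/
def IsComponent (P Q : Finset Cell) : Prop :=
  Q ⊆ P ∧ IsPolyomino Q ∧ ∀ c ∈ P, c ∉ Q → ¬ IsPolyomino (insert c Q)

/-- `P` is simple: any two cells not in `P` are joined by an edge-path of cells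
avoiding `P`. -/
def SimpleColl (P : Finset Cell) : Prop :=
  ∀ c d : Cell, c ∉ P → d ∉ P →
    Relation.ReflTransGen (fun a b => a ∉ P ∧ b ∉ P ∧ AdjCell a b) c d

/-!
Suppose the components `P₁ ≠ P₂` share two vertices `v ≠ w`. Distinct components are disjoint and
not edge-adjacent, so at each shared vertex a cell of `P₁` and a cell of `P₂` meet diagonally, and
the other two cells at that vertex lie outside `P`. Joining the two diagonal pairs by paths inside
`P₁` and inside `P₂` gives a closed king-move walk through `P` that passes through the diagonal at
`v` exactly once. The parity of the winding number of this walk around a cell is unchanged by an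
edge step between cells off the walk, but it differs at the two empty cells at `v`; so these cannot
be joined outside `P`, contradicting simplicity.
-/

lemma AdjCell.symm {a b : Cell} (h : AdjCell a b) : AdjCell b a := by
  unfold AdjCell at *; omega

lemma IsPolyomino.insert_of_adjCell {Q : Finset Cell} (hQ : IsPolyomino Q) {y g : Cell}
    (hy : y ∈ Q) (hyg : AdjCell y g) : IsPolyomino (insert g Q) := by
  let r := fun c d : Cell => c ∈ insert g Q ∧ d ∈ insert g Q ∧ AdjCell c d
  have : Std.Symm r := ⟨fun _ _ h => ⟨h.2.1, h.1, h.2.2.symm⟩⟩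
  have from_y : ∀ x ∈ insert g Q, Relation.ReflTransGen r y x := by
    intro x hx
    rcases Finset.mem_insert.1 hx with rfl | hx
    · exact .single ⟨Finset.mem_insert_of_mem hy, Finset.mem_insert_self _ _, hyg⟩
    · exact Relation.ReflTransGen.mono (p := r) (fun c d h =>
        ⟨Finset.mem_insert_of_mem h.1, Finset.mem_insert_of_mem h.2.1, h.2.2⟩) _ _ (hQ.2 y hy x hx)
  exact ⟨Finset.insert_nonempty _ _, fun a ha b hb => (symm (from_y a ha)).trans (from_y b hb)⟩

namespace IsComponent

variable {P Q Q' : Finset Cell}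

lemma mem_of_adjCell (hQ : IsComponent P Q) {y z : Cell} (hy : y ∈ Q) (hz : z ∈ P)
    (hyz : AdjCell y z) : z ∈ Q :=
  by_contra fun hzQ => hQ.2.2 z hz hzQ (hQ.2.1.insert_of_adjCell hy hyz)

lemma subset_of_mem (hQ : IsComponent P Q) (hQ' : IsComponent P Q') {x : Cell} (hx : x ∈ Q)
    (hx' : x ∈ Q') : Q ⊆ Q' := by
  intro c hc
  have path := hQ.2.1.2 x hx c hc
  clear hc
  induction path with
  | refl => exact hx'
  | tail _ hyz ih => exact hQ'.mem_of_adjCell ih (hQ.1 hyz.2.1) hyz.2.2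

lemma disjoint (hQ : IsComponent P Q) (hQ' : IsComponent P Q') (hne : Q ≠ Q') :
    Disjoint Q Q' :=
  Finset.disjoint_left.2 fun _ hx hx' =>
    hne ((hQ.subset_of_mem hQ' hx hx').antisymm (hQ'.subset_of_mem hQ hx' hx))

lemma not_adjCell (hQ : IsComponent P Q) (hQ' : IsComponent P Q') (hne : Q ≠ Q') {c d : Cell}
    (hc : c ∈ Q) (hd : d ∈ Q') : ¬ AdjCell c d := fun h =>
  Finset.disjoint_left.1 (hQ.disjoint hQ' hne) (hQ.mem_of_adjCell hc (hQ'.1 hd) h) hd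

lemma not_mem_of_adjCell (hQ : IsComponent P Q) (hQ' : IsComponent P Q') (hne : Q ≠ Q')
    {c d g : Cell} (hc : c ∈ Q) (hd : d ∈ Q') (hcg : AdjCell c g) (hdg : AdjCell d g) :
    g ∉ P := fun hg =>
  Finset.disjoint_left.1 (hQ.disjoint hQ' hne) (hQ.mem_of_adjCell hc hg hcg)
    (hQ'.mem_of_adjCell hd hg hdg)

end IsComponent

def IsDiagonal (c d : Cell) : Prop :=
  (c.1 + 1 = d.1 ∨ d.1 + 1 = c.1) ∧ (c.2 + 1 = d.2 ∨ d.2 + 1 = c.2)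

namespace IsDiagonal

variable {c d : Cell}

lemma symm (h : IsDiagonal c d) : IsDiagonal d c := by
  unfold IsDiagonal at *; omega

lemma adjCell_left (h : IsDiagonal c d) : AdjCell c (c.1, d.2) := by
  unfold IsDiagonal AdjCell at *; omega

lemma adjCell_right (h : IsDiagonal c d) : AdjCell d (c.1, d.2) := by
  unfold IsDiagonal AdjCell at *; omega

end IsDiagonal

lemma isDiagonal_of_mem_cellVerts {c d v : Cell} (hcd : c ≠ d) (hadj : ¬ AdjCell c d)
    (hc : v ∈ cellVerts c) (hd : v ∈ cellVerts d) :
    IsDiagonal c d ∧ v = (max c.1 d.1, max c.2 d.2) := by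
  obtain ⟨c1, c2⟩ := c; obtain ⟨d1, d2⟩ := d; obtain ⟨v1, v2⟩ := v
  simp only [cellVerts, Finset.mem_insert, Finset.mem_singleton, Prod.mk.injEq, AdjCell,
    IsDiagonal, ne_eq] at *
  omega

lemma IsComponent.exists_isDiagonal_of_mem_verts {P P1 P2 : Finset Cell}
    (h1 : IsComponent P P1) (h2 : IsComponent P P2) (hne : P1 ≠ P2) {v : Cell}
    (hv1 : v ∈ verts P1) (hv2 : v ∈ verts P2) :
    ∃ c ∈ P1, ∃ d ∈ P2, IsDiagonal c d ∧ v = (max c.1 d.1, max c.2 d.2) := by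
  obtain ⟨c, hc, hvc⟩ := Finset.mem_biUnion.1 hv1
  obtain ⟨d, hd, hvd⟩ := Finset.mem_biUnion.1 hv2
  have hcd : c ≠ d := fun h => Finset.disjoint_left.1 (h1.disjoint h2 hne) hc (h ▸ hd)
  exact ⟨c, hc, d, hd, isDiagonal_of_mem_cellVerts hcd (h1.not_adjCell h2 hne hc hd) hvc hvd⟩

def kingGraph : SimpleGraph Cell where
  Adj z z' := z ≠ z' ∧ z.1 ≤ z'.1 + 1 ∧ z'.1 ≤ z.1 + 1 ∧ z.2 ≤ z'.2 + 1 ∧ z'.2 ≤ z.2 + 1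
  symm := ⟨fun _ _ h => ⟨h.1.symm, by omega⟩⟩
  loopless := ⟨fun _ h => h.1 rfl⟩

lemma kingGraph_adj {z z' : Cell} : kingGraph.Adj z z' ↔
    z ≠ z' ∧ z.1 ≤ z'.1 + 1 ∧ z'.1 ≤ z.1 + 1 ∧ z.2 ≤ z'.2 + 1 ∧ z'.2 ≤ z.2 + 1 :=
  Iff.rfl

lemma AdjCell.kingAdj {a b : Cell} (h : AdjCell a b) : kingGraph.Adj a b := by
  obtain ⟨a1, a2⟩ := a; obtain ⟨b1, b2⟩ := b
  simp only [AdjCell, kingGraph_adj, ne_eq, Prod.mk.injEq] at *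
  omega

lemma IsDiagonal.kingAdj {a b : Cell} (h : IsDiagonal a b) : kingGraph.Adj a b := by
  obtain ⟨a1, a2⟩ := a; obtain ⟨b1, b2⟩ := b
  simp only [IsDiagonal, kingGraph_adj, ne_eq, Prod.mk.injEq] at *
  omega

lemma exists_kingWalk_of_cellConnected {Q : Finset Cell} (hQ : CellConnected Q) {a b : Cell}
    (ha : a ∈ Q) (hb : b ∈ Q) : ∃ w : kingGraph.Walk a b, ∀ z ∈ w.support, z ∈ Q := by
  have path := hQ a ha b hb
  clear hb
  induction path with
  | refl => exact ⟨.nil, by simpa⟩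
  | tail _ hbc ih =>
    obtain ⟨w, hw⟩ := ih
    refine ⟨w.concat hbc.2.2.kingAdj, fun z hz => ?_⟩
    rw [SimpleGraph.Walk.support_concat, List.mem_append, List.mem_singleton] at hz
    exact hz.elim (hw z) (· ▸ hbc.2.1)

lemma SimpleGraph.Walk.ne_of_mem_darts {V : Type*} {G : SimpleGraph V} {u v r : V}
    {w : G.Walk u v} {d : G.Dart} (hd : d ∈ w.darts) (hr : r ∉ w.support) :
    d.fst ≠ r ∧ d.snd ≠ r :=
  ⟨fun h => hr (h ▸ w.dart_fst_mem_support_of_mem_darts hd),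
    fun h => hr (h ▸ w.dart_snd_mem_support_of_mem_darts hd)⟩

lemma SimpleGraph.Walk.sum_darts_sub {V M : Type*} [AddCommGroup M] {G : SimpleGraph V}
    (f : V → M) {u v : V} (w : G.Walk u v) :
    (w.darts.map fun d => f d.snd - f d.fst).sum = f v - f u := by
  induction w with
  | nil => simp
  | cons _ p ih => simp only [darts_cons, List.map_cons, List.sum_cons, ih]; abel

lemma SimpleGraph.Walk.sum_darts_add_eq_zero {V R : Type*} [Ring R] [CharP R 2]
    {G : SimpleGraph V} (f : V → R) {u : V} (w : G.Walk u u) :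
    (w.darts.map fun d => f d.fst + f d.snd).sum = 0 := by
  simpa [CharTwo.sub_eq_add, add_comm] using w.sum_darts_sub f

lemma List.sum_map_ite_eq_count {α R : Type*} [DecidableEq α] [AddCommMonoidWithOne R]
    (l : List α) (a : α) : (l.map fun b => if b = a then (1 : R) else 0).sum = l.count a := by
  induction l with
  | nil => simp
  | cons b l ih => by_cases h : b = a <;> simp [h, ih, add_comm]

/-- Equal to `1` when the segment joining the centres of `z` and `z'` crosses the vertical
half-line going down from the midpoint of the right edge of `p`. -/
def rayCross (z z' p : Cell) : ZMod 2 :=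
  if ((z.1 = p.1 ∧ z'.1 = p.1 + 1) ∨ (z'.1 = p.1 ∧ z.1 = p.1 + 1)) ∧ z.2 + z'.2 < 2 * p.2
  then 1 else 0

/-- For a closed walk avoiding `p`, the parity of its winding number around the centre of `p`. -/
def windingParity {u v : Cell} (w : kingGraph.Walk u v) (p : Cell) : ZMod 2 :=
  (w.darts.map fun d => rayCross d.fst d.snd p).sum

/-- On king steps avoiding `p` and `q`, the crossings at `p` and at `q` differ by `g` up to the
coboundary of some `h`; summed over a closed walk the coboundary cancels. -/
def IsCrossingDefect (g : Cell → Cell → ZMod 2) (p q : Cell) : Prop :=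
  ∃ h : Cell → ZMod 2, ∀ z z', kingGraph.Adj z z' → z ≠ p → z' ≠ p → z ≠ q → z' ≠ q →
    rayCross z z' p + rayCross z z' q = h z + h z' + g z z'

lemma IsCrossingDefect.symm {g : Cell → Cell → ZMod 2} {p q : Cell} (hpq : IsCrossingDefect g p q) :
    IsCrossingDefect g q p := by
  obtain ⟨h, hh⟩ := hpq
  exact ⟨h, fun z z' hz h1 h2 h3 h4 => by rw [add_comm]; exact hh z z' hz h3 h4 h1 h2⟩

lemma isCrossingDefect_vertical (a b : ℕ) : IsCrossingDefect (fun _ _ => 0) (a, b) (a, b + 1) := by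
  refine ⟨fun _ => 0, ?_⟩
  rintro ⟨z1, z2⟩ ⟨z1', z2'⟩ hz h1 h2 h3 h4
  simp only [rayCross, kingGraph_adj, ne_eq, Prod.mk.injEq] at *
  split_ifs <;> first | rfl | omega

lemma isCrossingDefect_horizontal (a b : ℕ) :
    IsCrossingDefect (fun _ _ => 0) (a, b) (a + 1, b) := by
  refine ⟨fun u => if u.1 = a + 1 ∧ u.2 < b then 1 else 0, ?_⟩
  rintro ⟨z1, z2⟩ ⟨z1', z2'⟩ hz h1 h2 h3 h4
  simp only [rayCross, kingGraph_adj, ne_eq, Prod.mk.injEq] at *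
  split_ifs <;> first | rfl | omega

lemma isCrossingDefect_diagonal (a b : ℕ) :
    IsCrossingDefect (fun z z' => if s(z, z') = s((a, b), (a + 1, b + 1)) then 1 else 0)
      (a, b + 1) (a + 1, b) := by
  refine ⟨fun u => if u.1 = a + 1 ∧ u.2 ≤ b then 1 else 0, ?_⟩
  rintro ⟨z1, z2⟩ ⟨z1', z2'⟩ hz h1 h2 h3 h4
  simp only [rayCross, kingGraph_adj, Sym2.eq_iff, ne_eq, Prod.mk.injEq] at *
  split_ifs <;> first | rfl | omega

lemma isCrossingDefect_antidiagonal (a b : ℕ) :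
    IsCrossingDefect (fun z z' => if s(z, z') = s((a + 1, b), (a, b + 1)) then 1 else 0)
      (a + 1, b + 1) (a, b) := by
  refine ⟨fun u => if u.1 = a + 1 ∧ u.2 ≤ b then 1 else 0, ?_⟩
  rintro ⟨z1, z2⟩ ⟨z1', z2'⟩ hz h1 h2 h3 h4
  simp only [rayCross, kingGraph_adj, Sym2.eq_iff, ne_eq, Prod.mk.injEq] at *
  split_ifs <;> first | rfl | omega

lemma AdjCell.isCrossingDefect {p q : Cell} (hpq : AdjCell p q) :
    IsCrossingDefect (fun _ _ => 0) p q := by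
  obtain ⟨p1, p2⟩ := p; obtain ⟨q1, q2⟩ := q
  simp only [AdjCell] at hpq
  rcases hpq with ⟨rfl, rfl | rfl⟩ | ⟨rfl, rfl | rfl⟩
  exacts [isCrossingDefect_vertical _ _, (isCrossingDefect_vertical _ _).symm,
    isCrossingDefect_horizontal _ _, (isCrossingDefect_horizontal _ _).symm]

lemma IsDiagonal.isCrossingDefect {x y : Cell} (hxy : IsDiagonal x y) :
    IsCrossingDefect (fun z z' => if s(z, z') = s(x, y) then 1 else 0) (x.1, y.2) (y.1, x.2) := by
  obtain ⟨x1, x2⟩ := x; obtain ⟨y1, y2⟩ := y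
  dsimp only [IsDiagonal] at hxy
  rcases hxy with ⟨rfl | rfl, rfl | rfl⟩
  · exact isCrossingDefect_diagonal _ _
  · simpa only [Sym2.eq_swap (a := ((x1 + 1, y2) : Cell))]
      using (isCrossingDefect_antidiagonal x1 y2).symm
  · exact isCrossingDefect_antidiagonal _ _
  · simpa only [Sym2.eq_swap (a := ((y1, y2) : Cell))] using (isCrossingDefect_diagonal y1 y2).symm

lemma IsCrossingDefect.windingParity_add {g : Cell → Cell → ZMod 2} {p q : Cell}
    (hpq : IsCrossingDefect g p q) {u : Cell} (w : kingGraph.Walk u u) (hp : p ∉ w.support)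
    (hq : q ∉ w.support) :
    windingParity w p + windingParity w q = (w.darts.map fun d => g d.fst d.snd).sum := by
  obtain ⟨h, hh⟩ := hpq
  calc windingParity w p + windingParity w q
      = (w.darts.map fun d => (h d.fst + h d.snd) + g d.fst d.snd).sum := by
        simp only [windingParity, ← List.sum_map_add]
        refine congrArg List.sum (List.map_congr_left fun d hd => ?_)
        exact hh _ _ d.adj (w.ne_of_mem_darts hd hp).1 (w.ne_of_mem_darts hd hp).2
          (w.ne_of_mem_darts hd hq).1 (w.ne_of_mem_darts hd hq).2
    _ = (w.darts.map fun d => g d.fst d.snd).sum := by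
        rw [List.sum_map_add, w.sum_darts_add_eq_zero, zero_add]

lemma windingParity_eq_of_adjCell {u : Cell} (w : kingGraph.Walk u u) {p q : Cell}
    (hp : p ∉ w.support) (hq : q ∉ w.support) (hpq : AdjCell p q) :
    windingParity w p = windingParity w q := by
  rw [← CharTwo.add_eq_zero, hpq.isCrossingDefect.windingParity_add w hp hq]
  simp

lemma windingParity_add_of_isDiagonal {u : Cell} (w : kingGraph.Walk u u) {x y : Cell}
    (hxy : IsDiagonal x y) (hx : (x.1, y.2) ∉ w.support) (hy : (y.1, x.2) ∉ w.support) :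
    windingParity w (x.1, y.2) + windingParity w (y.1, x.2) = w.edges.count s(x, y) := by
  rw [hxy.isCrossingDefect.windingParity_add w hx hy, SimpleGraph.Walk.edges,
    ← List.sum_map_ite_eq_count, List.map_map]
  rfl

lemma windingParity_eq_of_reflTransGen {P : Finset Cell} {u : Cell} (w : kingGraph.Walk u u)
    (hw : ∀ z ∈ w.support, z ∈ P) {e f : Cell}
    (hef : Relation.ReflTransGen (fun a b => a ∉ P ∧ b ∉ P ∧ AdjCell a b) e f) :
    windingParity w e = windingParity w f := by
  induction hef with
  | refl => rfl
  | tail _ hab ih =>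
    exact ih.trans (windingParity_eq_of_adjCell w (fun h => hab.1 (hw _ h))
      (fun h => hab.2.1 (hw _ h)) hab.2.2)

lemma exists_closed_kingWalk {P1 P2 : Finset Cell} (hP : Disjoint P1 P2)
    (hP1 : CellConnected P1) (hP2 : CellConnected P2) {c1 c2 d1 d2 : Cell} (hc1 : c1 ∈ P1)
    (hc2 : c2 ∈ P1) (hd1 : d1 ∈ P2) (hd2 : d2 ∈ P2) (hcd1 : IsDiagonal c1 d1)
    (hcd2 : IsDiagonal c2 d2) (hne : (c1, d1) ≠ (c2, d2)) :
    ∃ w : kingGraph.Walk c1 c1, (∀ z ∈ w.support, z ∈ P1 ∪ P2) ∧ w.edges.count s(c1, d1) = 1 := by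
  obtain ⟨w1, hw1⟩ := exists_kingWalk_of_cellConnected hP1 hc1 hc2
  obtain ⟨w2, hw2⟩ := exists_kingWalk_of_cellConnected hP2 hd2 hd1
  refine ⟨(w1.concat hcd2.kingAdj).append (w2.concat hcd1.symm.kingAdj), fun z hz => ?_, ?_⟩
  · simp only [SimpleGraph.Walk.mem_support_append_iff, SimpleGraph.Walk.support_concat,
      List.mem_append, List.mem_singleton] at hz
    rcases hz with (hz | rfl) | hz | rfl
    exacts [Finset.mem_union_left _ (hw1 z hz), Finset.mem_union_right _ hd2,
      Finset.mem_union_right _ (hw2 z hz), Finset.mem_union_left _ hc1]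
  · have h1 : s(c1, d1) ∉ w1.edges := fun h =>
      Finset.disjoint_left.1 hP (hw1 _ (w1.snd_mem_support_of_mem_edges h)) hd1
    have h2 : s(c1, d1) ∉ w2.edges := fun h =>
      Finset.disjoint_left.1 hP hc1 (hw2 _ (w2.fst_mem_support_of_mem_edges h))
    have h3 : s(c2, d2) ≠ s(c1, d1) := by
      rw [Ne, Sym2.eq_iff]
      rintro (⟨rfl, rfl⟩ | ⟨rfl, -⟩)
      exacts [hne rfl, Finset.disjoint_left.1 hP hc2 hd1]
    simp [SimpleGraph.Walk.edges_append, SimpleGraph.Walk.edges_concat, List.count_append,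
      List.count_eq_zero.2 h1, List.count_eq_zero.2 h2, h3, Sym2.eq_swap]

/-- In a simple collection of cells, two distinct connected components share at
most one vertex. -/
theorem stmt11 (P P1 P2 : Finset Cell) (hs : SimpleColl P)
    (h1 : IsComponent P P1) (h2 : IsComponent P P2) (hne : P1 ≠ P2) :
    (verts P1 ∩ verts P2).card ≤ 1 := by
  refine Finset.card_le_one.2 fun v hv v' hv' => by_contra fun hvv' => ?_
  rw [Finset.mem_inter] at hv hv'
  obtain ⟨c1, hc1, d1, hd1, hcd1, rfl⟩ := h1.exists_isDiagonal_of_mem_verts h2 hne hv.1 hv.2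
  obtain ⟨c2, hc2, d2, hd2, hcd2, rfl⟩ := h1.exists_isDiagonal_of_mem_verts h2 hne hv'.1 hv'.2
  obtain ⟨w, hwP, hcount⟩ := exists_closed_kingWalk (h1.disjoint h2 hne) h1.2.1.2 h2.2.1.2
    hc1 hc2 hd1 hd2 hcd1 hcd2 fun h => hvv' (by obtain ⟨rfl, rfl⟩ := Prod.mk.inj h; rfl)
  have hw : ∀ z ∈ w.support, z ∈ P := fun z hz =>
    (Finset.mem_union.1 (hwP z hz)).elim (h1.1 ·) (h2.1 ·)
  have he : (c1.1, d1.2) ∉ P :=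
    h1.not_mem_of_adjCell h2 hne hc1 hd1 hcd1.adjCell_left hcd1.adjCell_right
  have hf : (d1.1, c1.2) ∉ P :=
    h1.not_mem_of_adjCell h2 hne hc1 hd1 hcd1.symm.adjCell_right hcd1.symm.adjCell_left
  have key := windingParity_add_of_isDiagonal w hcd1 (fun h => he (hw _ h)) (fun h => hf (hw _ h))
  rw [windingParity_eq_of_reflTransGen w hw (hs _ _ he hf), CharTwo.add_self_eq_zero, hcount,
    Nat.cast_one] at key
  exact zero_ne_one key
end
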